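/- arXiv:2404.10191 — 3 statements merged into one kernel-verified Lean document; each statement's English description precedes it below -/
import Mathlib

section
/- Let P be a symmetric positive definite n×n real matrix, R a symmetric positive definite m×m real matrix, and H an m×n real matrix, and let K* = P·Hᵀ·(H·P·Hᵀ + R)⁻¹ be the Kalman gain. Then for every n×m real matrix K, the difference P_K - P_{K*} is positive semidefinite, i.e. P_{K*} ≤ P_K in the Loewner order. -/
/-!
With `S = H·P·Hᵀ + R`, the posterior covariance is a quadratic function of the gain,
`P_K = P + (K·S·Kᵀ - K·(P·Hᵀ)ᵀ - P·Hᵀ·Kᵀ)`, and the Kalman gain solves `K*·S = P·Hᵀ`.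
Completing the square gives `P_K - P_{K*} = (K - K*)·S·(K - K*)ᵀ`, which is positive
semidefinite because `S` is positive definite.
-/

open Matrix

/-- The posterior covariance matrix `P_K = (I - K·H)·P·(I - K·H)ᵀ + K·R·Kᵀ`. -/
noncomputable def postCov {n m : ℕ} (P : Matrix (Fin n) (Fin n) ℝ)
    (R : Matrix (Fin m) (Fin m) ℝ) (H : Matrix (Fin m) (Fin n) ℝ)
    (K : Matrix (Fin n) (Fin m) ℝ) : Matrix (Fin n) (Fin n) ℝ :=
  (1 - K * H) * P * (1 - K * H)ᵀ + K * R * Kᵀ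

/-- The Kalman gain `K* = P·Hᵀ·(H·P·Hᵀ + R)⁻¹`. -/
noncomputable def kalmanGain {n m : ℕ} (P : Matrix (Fin n) (Fin n) ℝ)
    (R : Matrix (Fin m) (Fin m) ℝ) (H : Matrix (Fin m) (Fin n) ℝ) :
    Matrix (Fin n) (Fin m) ℝ :=
  P * Hᵀ * (H * P * Hᵀ + R)⁻¹

namespace Matrix

variable {α : Type*} [CommRing α] {m n : Type*} [Fintype m]

theorem mul_mul_transpose_sub_sub_sub_eq_of_mul_eq {S : Matrix m m α} (hS : Sᵀ = S)
    {K₀ B : Matrix n m α} (hK₀ : K₀ * S = B) (K : Matrix n m α) :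
    (K * S * Kᵀ - K * Bᵀ - B * Kᵀ) - (K₀ * S * K₀ᵀ - K₀ * Bᵀ - B * K₀ᵀ) =
      (K - K₀) * S * (K - K₀)ᵀ := by
  subst hK₀
  simp only [transpose_mul, hS, transpose_sub, Matrix.sub_mul, Matrix.mul_sub, Matrix.mul_assoc]
  abel

end Matrix

theorem Matrix.PosSemidef.mul_mul_transpose_add {m n : Type*} [Fintype m] [Fintype n]
    {P : Matrix n n ℝ} {R : Matrix m m ℝ} (hP : P.PosSemidef) (hR : R.PosDef)
    (H : Matrix m n ℝ) : (H * P * Hᵀ + R).PosDef := by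
  simpa using PosDef.posSemidef_add (hP.mul_mul_conjTranspose_same H) hR

theorem postCov_eq_add {n m : ℕ} {P : Matrix (Fin n) (Fin n) ℝ} (hP : Pᵀ = P)
    (R : Matrix (Fin m) (Fin m) ℝ) (H : Matrix (Fin m) (Fin n) ℝ)
    (K : Matrix (Fin n) (Fin m) ℝ) :
    postCov P R H K =
      P + (K * (H * P * Hᵀ + R) * Kᵀ - K * (P * Hᵀ)ᵀ - P * Hᵀ * Kᵀ) := by
  simp only [postCov, transpose_sub, transpose_one, transpose_mul, transpose_transpose, hP,
    Matrix.sub_mul, Matrix.mul_sub, Matrix.add_mul, Matrix.mul_add, Matrix.one_mul,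
    Matrix.mul_one, Matrix.mul_assoc]
  abel

theorem kalmanGain_mul {n m : ℕ} {P : Matrix (Fin n) (Fin n) ℝ}
    {R : Matrix (Fin m) (Fin m) ℝ} {H : Matrix (Fin m) (Fin n) ℝ}
    (h : IsUnit (H * P * Hᵀ + R).det) :
    kalmanGain P R H * (H * P * Hᵀ + R) = P * Hᵀ := by
  rw [kalmanGain, Matrix.mul_assoc, nonsing_inv_mul _ h, Matrix.mul_one]

theorem postCov_kalmanGain_le {n m : ℕ} (P : Matrix (Fin n) (Fin n) ℝ)
    (R : Matrix (Fin m) (Fin m) ℝ) (H : Matrix (Fin m) (Fin n) ℝ)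
    (hP : P.PosDef) (hR : R.PosDef) (K : Matrix (Fin n) (Fin m) ℝ) :
    (postCov P R H K - postCov P R H (kalmanGain P R H)).PosSemidef := by
  have hPT : Pᵀ = P := by simpa using hP.isHermitian.eq
  have hS : (H * P * Hᵀ + R).PosDef := hP.posSemidef.mul_mul_transpose_add hR H
  have hST : (H * P * Hᵀ + R)ᵀ = H * P * Hᵀ + R := by simpa using hS.isHermitian.eq
  have hK : kalmanGain P R H * (H * P * Hᵀ + R) = P * Hᵀ :=
    kalmanGain_mul ((isUnit_iff_isUnit_det _).mp hS.isUnit)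
  rw [postCov_eq_add hPT, postCov_eq_add hPT, add_sub_add_left_eq_sub,
    mul_mul_transpose_sub_sub_sub_eq_of_mul_eq hST hK]
  simpa using hS.posSemidef.mul_mul_conjTranspose_same (K - kalmanGain P R H)
end

section
/- Let P be a symmetric positive definite n×n real matrix, R a symmetric positive definite m×m real matrix, and H an m×n real matrix, and let K* = P·Hᵀ·(H·P·Hᵀ + R)⁻¹ be the Kalman gain. Then K* minimizes the total posterior variance: for every n×m real matrix K, trace(P_{K*}) ≤ trace(P_K). -/
open Matrix

/-!
Writing `S = H·P·Hᵀ + R` for the innovation covariance, `P_K` is a quadratic function of `K`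
whose quadratic part is `K·S·Kᵀ`. The Kalman gain solves the normal equation `K*·S = P·Hᵀ`, and
completing the square gives `P_K = P_{K*} + (K - K*)·S·(K - K*)ᵀ`. The last term is positive
semidefinite because `S` is, so its trace is nonnegative.
-/

noncomputable def innovationCov {n m : ℕ} (P : Matrix (Fin n) (Fin n) ℝ)
    (R : Matrix (Fin m) (Fin m) ℝ) (H : Matrix (Fin m) (Fin n) ℝ) : Matrix (Fin m) (Fin m) ℝ :=
  H * P * Hᵀ + R

section

variable {n m : ℕ} {P : Matrix (Fin n) (Fin n) ℝ} {R : Matrix (Fin m) (Fin m) ℝ}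
  (H : Matrix (Fin m) (Fin n) ℝ)

theorem innovationCov_posDef (hP : P.PosSemidef) (hR : R.PosDef) :
    (innovationCov P R H).PosDef :=
  PosDef.posSemidef_add (hP.mul_mul_conjTranspose_same H) hR

theorem innovationCov_isSymm (hP : P.IsSymm) (hR : R.IsSymm) : (innovationCov P R H).IsSymm := by
  rw [IsSymm, innovationCov, transpose_add, transpose_mul, transpose_mul, transpose_transpose,
    hP.eq, hR.eq, Matrix.mul_assoc]

theorem kalmanGain_mul_innovationCov (hS : IsUnit (innovationCov P R H).det) :
    kalmanGain P R H * innovationCov P R H = P * Hᵀ := by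
  rw [kalmanGain, Matrix.mul_assoc, ← innovationCov, nonsing_inv_mul _ hS, Matrix.mul_one]

theorem postCov_eq_sub_sub_add (K : Matrix (Fin n) (Fin m) ℝ) :
    postCov P R H K = P - K * (H * P) - P * Hᵀ * Kᵀ + K * innovationCov P R H * Kᵀ := by
  simp only [postCov, innovationCov, transpose_sub, transpose_mul, transpose_one,
    Matrix.sub_mul, Matrix.mul_sub, Matrix.one_mul, Matrix.mul_one, Matrix.mul_add,
    Matrix.add_mul, Matrix.mul_assoc]
  abel

theorem postCov_eq_add_of_mul_innovationCov (hP : P.IsSymm) (hR : R.IsSymm)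
    {K₀ : Matrix (Fin n) (Fin m) ℝ} (hK₀ : K₀ * innovationCov P R H = P * Hᵀ)
    (K : Matrix (Fin n) (Fin m) ℝ) :
    postCov P R H K =
      postCov P R H K₀ + (K - K₀) * innovationCov P R H * (K - K₀)ᵀ := by
  have hK₀' : innovationCov P R H * K₀ᵀ = H * P := by
    simpa only [transpose_mul, transpose_transpose, hP.eq, (innovationCov_isSymm H hP hR).eq]
      using congrArg transpose hK₀
  rw [postCov_eq_sub_sub_add H, postCov_eq_sub_sub_add H, ← hK₀, ← hK₀']
  simp only [transpose_sub, Matrix.mul_sub, Matrix.sub_mul, Matrix.mul_assoc]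
  abel

end

theorem trace_postCov_kalmanGain_le {n m : ℕ} (P : Matrix (Fin n) (Fin n) ℝ)
    (R : Matrix (Fin m) (Fin m) ℝ) (H : Matrix (Fin m) (Fin n) ℝ)
    (hP : P.PosDef) (hR : R.PosDef) (K : Matrix (Fin n) (Fin m) ℝ) :
    (postCov P R H (kalmanGain P R H)).trace ≤ (postCov P R H K).trace := by
  have hS := innovationCov_posDef H hP.posSemidef hR
  have hK₀ := kalmanGain_mul_innovationCov H hS.det_pos.ne'.isUnit
  rw [postCov_eq_add_of_mul_innovationCov H
    (isHermitian_iff_isSymm.mp hP.isHermitian) (isHermitian_iff_isSymm.mp hR.isHermitian) hK₀ K,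
    trace_add]
  exact le_add_of_nonneg_right
    (hS.posSemidef.mul_mul_conjTranspose_same (K - kalmanGain P R H)).trace_nonneg
end

section
/- Let P be a symmetric positive definite n×n real matrix, R a symmetric positive definite m×m real matrix, and H an m×n real matrix, and let K* = P·Hᵀ·(H·P·Hᵀ + R)⁻¹ be the Kalman gain. Then K* minimizes the posterior generalized variance: for every n×m real matrix K, det(P_{K*}) ≤ det(P_K). -/
open Matrix

/-!
With `S = H·P·Hᵀ + R`, completing the square gives
`P_K = P_{K*} + (K - K*)·S·(K - K*)ᵀ`, so `P_{K*} ≤ P_K` in the Loewner order.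
The determinant is monotone on positive semidefinite matrices: if `det A ≠ 0`, conjugating by
`A^{-1/2}` reduces `A ≤ B` to `1 ≤ A^{-1/2}·B·A^{-1/2}`, whose eigenvalues are Rayleigh quotients
and hence at least `1`.
-/

open scoped MatrixOrder

namespace Matrix

variable {ι : Type*} [Fintype ι] [DecidableEq ι]

theorem one_le_eigenvalues_of_one_le {A : Matrix ι ι ℝ} (hA : 1 ≤ A) (hAh : A.IsHermitian)
    (i : ι) : 1 ≤ hAh.eigenvalues i := by
  set v := hAh.eigenvectorBasis i
  have hv : star ⇑v ⬝ᵥ ⇑v = 1 := by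
    rw [dotProduct_comm, ← EuclideanSpace.inner_eq_star_dotProduct, real_inner_self_eq_norm_sq,
      hAh.eigenvectorBasis.orthonormal.1 i, one_pow]
  have h := (le_iff.mp hA).re_dotProduct_nonneg ⇑v
  rw [hAh.eigenvalues_eq i]
  simp only [sub_mulVec, one_mulVec, dotProduct_sub, hv, RCLike.re_to_real] at h ⊢
  linarith

theorem one_le_det_of_one_le {A : Matrix ι ι ℝ} (hA : 1 ≤ A) : 1 ≤ A.det := by
  have hAh : A.IsHermitian := by
    simpa using ((le_iff.mp hA).add PosSemidef.one).isHermitian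
  rw [hAh.det_eq_prod_eigenvalues]
  simpa using Finset.prod_le_prod (fun _ _ ↦ zero_le_one)
    fun i _ ↦ one_le_eigenvalues_of_one_le hA hAh i

theorem det_le_det {A B : Matrix ι ι ℝ} (hA : 0 ≤ A) (hAB : A ≤ B) : A.det ≤ B.det := by
  obtain hdet | hdet := eq_or_ne A.det 0
  · rw [hdet]
    exact (nonneg_iff_posSemidef.mp (hA.trans hAB)).det_nonneg
  set Q := CFC.sqrt A
  have hQQ : Q * Q = A := CFC.sqrt_mul_sqrt_self A hA
  have hdetA : A.det = Q.det ^ 2 := by rw [← hQQ, det_mul, sq]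
  have hQ : IsUnit Q.det := by
    rw [isUnit_iff_ne_zero]
    rintro h
    simp [hdetA, h] at hdet
  have hle : 1 ≤ Q⁻¹ * B * Q⁻¹ := by
    have hQinv : IsSelfAdjoint Q⁻¹ := IsHermitian.inv (CFC.sqrt_nonneg A).isSelfAdjoint
    have h := hQinv.conjugate_le_conjugate hAB
    rwa [← hQQ, Matrix.mul_assoc, Matrix.mul_assoc, mul_nonsing_inv _ hQ, Matrix.mul_one,
      nonsing_inv_mul _ hQ] at h
  have h := one_le_det_of_one_le hle
  rw [det_mul, det_mul, det_nonsing_inv, Ring.inverse_eq_inv'] at h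
  calc A.det = Q.det ^ 2 * 1 := by rw [hdetA, mul_one]
    _ ≤ Q.det ^ 2 * (Q.det⁻¹ * B.det * Q.det⁻¹) := by gcongr
    _ = B.det := by field_simp [hQ.ne_zero]

end Matrix

section Kalman

variable {n m : ℕ} {P : Matrix (Fin n) (Fin n) ℝ} {R : Matrix (Fin m) (Fin m) ℝ}
  (H : Matrix (Fin m) (Fin n) ℝ)

theorem posDef_mul_mul_transpose_add (hP : P.PosSemidef) (hR : R.PosDef) :
    (H * P * Hᵀ + R).PosDef := by
  have h := PosDef.posSemidef_add (hP.mul_mul_conjTranspose_same H) hR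
  rwa [conjTranspose_eq_transpose_of_trivial] at h

theorem postCov_posSemidef (hP : P.PosSemidef) (hR : R.PosSemidef)
    (K : Matrix (Fin n) (Fin m) ℝ) : (postCov P R H K).PosSemidef := by
  have h := (hP.mul_mul_conjTranspose_same (1 - K * H)).add (hR.mul_mul_conjTranspose_same K)
  rwa [conjTranspose_eq_transpose_of_trivial, conjTranspose_eq_transpose_of_trivial] at h

theorem postCov_eq (K : Matrix (Fin n) (Fin m) ℝ) :
    postCov P R H K = P - K * (H * P) - P * Hᵀ * Kᵀ + K * (H * P * Hᵀ + R) * Kᵀ := by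
  simp only [postCov, transpose_sub, transpose_one, transpose_mul, Matrix.sub_mul,
    Matrix.mul_sub, Matrix.one_mul, Matrix.mul_one, Matrix.mul_add, Matrix.add_mul,
    Matrix.mul_assoc]
  abel

theorem postCov_eq_postCov_add (hP : P.IsSymm) (hR : R.IsSymm) {K₀ : Matrix (Fin n) (Fin m) ℝ}
    (hK₀ : K₀ * (H * P * Hᵀ + R) = P * Hᵀ) (K : Matrix (Fin n) (Fin m) ℝ) :
    postCov P R H K = postCov P R H K₀ + (K - K₀) * (H * P * Hᵀ + R) * (K - K₀)ᵀ := by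
  have hHP : H * P = (H * P * Hᵀ + R) * K₀ᵀ := by
    simpa [transpose_mul, hP.eq, hR.eq, Matrix.mul_assoc] using (congrArg transpose hK₀).symm
  rw [postCov_eq, postCov_eq]
  -- abstracting `S` keeps `rw [hHP]` from also rewriting the `H * P` inside it
  set S := H * P * Hᵀ + R
  rw [hHP, ← hK₀]
  simp only [transpose_sub, Matrix.sub_mul, Matrix.mul_sub, Matrix.mul_assoc]
  abel

theorem kalmanGain_mul_s5 (hP : P.PosSemidef) (hR : R.PosDef) :
    kalmanGain P R H * (H * P * Hᵀ + R) = P * Hᵀ := by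
  rw [kalmanGain, Matrix.mul_assoc,
    nonsing_inv_mul _ (posDef_mul_mul_transpose_add H hP hR).det_pos.ne'.isUnit, Matrix.mul_one]

end Kalman

theorem det_postCov_kalmanGain_le {n m : ℕ} (P : Matrix (Fin n) (Fin n) ℝ)
    (R : Matrix (Fin m) (Fin m) ℝ) (H : Matrix (Fin m) (Fin n) ℝ)
    (hP : P.PosDef) (hR : R.PosDef) (K : Matrix (Fin n) (Fin m) ℝ) :
    (postCov P R H (kalmanGain P R H)).det ≤ (postCov P R H K).det := by
  rw [postCov_eq_postCov_add H (isHermitian_iff_isSymm.mp hP.isHermitian)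
    (isHermitian_iff_isSymm.mp hR.isHermitian) (kalmanGain_mul_s5 H hP.posSemidef hR) K]
  refine det_le_det (postCov_posSemidef H hP.posSemidef hR.posSemidef _).nonneg
    (le_add_of_nonneg_right ?_)
  have h := (posDef_mul_mul_transpose_add H hP.posSemidef hR).posSemidef.mul_mul_conjTranspose_same
    (K - kalmanGain P R H)
  rw [conjTranspose_eq_transpose_of_trivial] at h
  exact h.nonneg
end
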